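/- arXiv:2504.09399 — 4 statements merged into one kernel-verified Lean document; each statement's English description precedes it below -/
import Mathlib

section
/- Suppose S = (a, e) is a k-rainbow sequence on Fin n such that every color in Fin k is attained by a on X (i.e., for all c ∈ Fin k there is x ∈ X with a(x) = c), and suppose i, j ∈ Fin n satisfy x ≤ i and x ≤ j for all x ∈ X, with i, j ∉ X. Then i and j have the same X-neighborhood in the associated rainbow threshold graph (i.e., for all x ∈ X, (i,x) is an edge iff (j,x) is an edge) if and only if e(i) = e(j). -/
/-- Rainbow threshold graph (set-of-colors version, general color type). -/
def rainGraph {X K : Type*} [LinearOrder X] (a : X → K) (e : X → Set K) :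
    SimpleGraph X where
  Adj x y := (x < y ∧ a x ∈ e y) ∨ (y < x ∧ a y ∈ e x)
  symm := ⟨by intro x y h; tauto⟩
  loopless := ⟨by rintro x (⟨h, -⟩ | ⟨h, -⟩) <;> exact absurd h (lt_irrefl x)⟩

theorem rainGraph_adj_of_lt {X K : Type*} [LinearOrder X] {a : X → K} {e : X → Set K}
    {x y : X} (h : x < y) : (rainGraph a e).Adj y x ↔ a x ∈ e y := by
  simp [rainGraph, h, h.not_gt]

theorem Set.eq_iff_forall_apply_mem_iff {α K : Type*} {a : α → K} {X : Set α}
    (hsurj : ∀ c : K, ∃ x ∈ X, a x = c) {s t : Set K} :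
    s = t ↔ ∀ x ∈ X, (a x ∈ s ↔ a x ∈ t) := by
  refine ⟨fun h _ _ => h ▸ Iff.rfl, fun h => Set.ext fun c => ?_⟩
  obtain ⟨x, hx, rfl⟩ := hsurj c
  exact h x hx

theorem all_colors_left_determines_sets {n k : ℕ}
    (a : Fin n → Fin k) (e : Fin n → Set (Fin k)) (X : Set (Fin n))
    (hall : ∀ c : Fin k, ∃ x ∈ X, a x = c)
    (i j : Fin n) (hi : i ∉ X) (hj : j ∉ X)
    (hle : ∀ x ∈ X, x ≤ i ∧ x ≤ j) :
    (∀ x ∈ X, ((rainGraph a e).Adj i x ↔ (rainGraph a e).Adj j x)) ↔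
      e i = e j := by
  rw [Set.eq_iff_forall_apply_mem_iff hall]
  refine forall₂_congr fun x hx => ?_
  have hxi : x < i := (hle x hx).1.lt_of_ne fun h => hi (h ▸ hx)
  have hxj : x < j := (hle x hx).2.lt_of_ne fun h => hj (h ▸ hx)
  rw [rainGraph_adj_of_lt hxi, rainGraph_adj_of_lt hxj]
end

section
/- Let G be a k-rainbow threshold graph on Fin n and let X ⊆ Fin n with |X| = m. Then the X-neighborhood equivalence relation on [n] \ X (where i ~ j iff for all c ∈ X, (i,c) is an edge iff (j,c) is an edge) has at most k · 2^k · (1 + m/2) equivalence classes. -/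
/-!
The trace on `X` of the neighbourhood of a vertex `i ∉ X` depends only on the pair
`(a i, e i)` and on the position of `i`. For a fixed pair, moving the position from `0` to `n`
changes the trace only when it passes an element `c ∈ X` at which the pair "mismatches"
(`a i ∈ e c` differs from `a c ∈ e i`), so the pair contributes at most
`1 + #{mismatching c ∈ X}` traces. Summing over the `k * 2 ^ k` pairs, and noting that each
`c` mismatches exactly half of all pairs, gives `k * 2 ^ k + m * (k * 2 ^ k / 2)`.
-/

/-- Rainbow threshold graph with finsets of colors. -/
def rseqGraph {n k : ℕ} (a : Fin n → Fin k) (e : Fin n → Finset (Fin k)) :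
    SimpleGraph (Fin n) where
  Adj x y := (x < y ∧ a x ∈ e y) ∨ (y < x ∧ a y ∈ e x)
  symm := ⟨by intro x y h; tauto⟩
  loopless := ⟨by rintro x (⟨h, -⟩ | ⟨h, -⟩) <;> exact absurd h (lt_irrefl x)⟩

instance {n k : ℕ} (a : Fin n → Fin k) (e : Fin n → Finset (Fin k)) :
    DecidableRel (rseqGraph a e).Adj := fun x y =>
  inferInstanceAs (Decidable ((x < y ∧ a x ∈ e y) ∨ (y < x ∧ a y ∈ e x)))

open Finset

theorem card_image_range_succ_le_one_add_card_changes {α : Type*} [DecidableEq α]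
    (P : ℕ → α) (N : ℕ) :
    #((range (N + 1)).image P) ≤ 1 + #{j ∈ range N | P (j + 1) ≠ P j} := by
  induction N with
  | zero => simp
  | succ N ih =>
    rw [range_add_one, image_insert]
    conv_rhs => rw [range_add_one, filter_insert]
    by_cases h : P (N + 1) = P N
    · rw [if_neg (not_not_intro h),
        insert_eq_of_mem (h ▸ mem_image_of_mem P (self_mem_range_succ N))]
      exact ih
    · rw [if_pos h, card_insert_of_notMem (s := {j ∈ range N | P (j + 1) ≠ P j}) (by simp)]
      have := card_insert_le (P (N + 1)) ((range (N + 1)).image P)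
      omega

theorem two_mul_card_filter_not_iff_mem {α : Type*} [Fintype α] [DecidableEq α]
    (S : Finset α) (x : α) :
    2 * #{p : α × Finset α | ¬(p.1 ∈ S ↔ x ∈ p.2)} = Fintype.card α * 2 ^ Fintype.card α := by
  let toggle : α × Finset α → α × Finset α := fun p => (p.1, symmDiff p.2 {x})
  have toggle_involutive : Function.Involutive toggle := fun p => by
    simp [toggle, symmDiff_symmDiff_cancel_right]
  have hsame : #{p : α × Finset α | p.1 ∈ S ↔ x ∈ p.2}
      = #{p : α × Finset α | ¬(p.1 ∈ S ↔ x ∈ p.2)} :=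
    card_equiv toggle_involutive.toPerm fun p => by
      simp only [mem_filter, mem_univ, true_and, Function.Involutive.coe_toPerm, toggle,
        mem_symmDiff, mem_singleton]
      tauto
  have htotal := card_filter_add_card_filter_not (s := (univ : Finset (α × Finset α)))
    (p := fun p => p.1 ∈ S ↔ x ∈ p.2)
  rw [card_univ, Fintype.card_prod, Fintype.card_finset, hsame] at htotal
  omega

section RainbowThreshold

variable {n k : ℕ} (a : Fin n → Fin k) (e : Fin n → Finset (Fin k)) (X : Finset (Fin n))

/-- The trace on `X` of the neighbourhood of a vertex with colour `p.1` and palette `p.2`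
inserted in the sequence just before position `t`. -/
def neighborPattern (p : Fin k × Finset (Fin k)) (t : ℕ) : Finset (Fin n) :=
  {c ∈ X | (c.val < t ∧ a c ∈ p.2) ∨ (t ≤ c.val ∧ p.1 ∈ e c)}

theorem filter_adj_eq_neighborPattern {i : Fin n} (hi : i ∉ X) :
    {c ∈ X | (rseqGraph a e).Adj i c} = neighborPattern a e X (a i, e i) i := by
  refine filter_congr fun c hc => ?_
  have hle : i ≤ c ↔ i < c := (ne_of_mem_of_not_mem hc hi).symm.le_iff_lt
  change _ ↔ (c.val < i.val ∧ _) ∨ (i.val ≤ c.val ∧ _)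
  rw [← Fin.lt_def, ← Fin.le_def, hle]
  exact Or.comm

theorem exists_mismatch_of_neighborPattern_succ_ne {p : Fin k × Finset (Fin k)} {t : ℕ}
    (h : neighborPattern a e X p (t + 1) ≠ neighborPattern a e X p t) :
    ∃ c ∈ X, c.val = t ∧ ¬(p.1 ∈ e c ↔ a c ∈ p.2) := by
  contrapose! h
  refine filter_congr fun c hc => ?_
  rcases eq_or_ne c.val t with hct | hct
  · simp [hct, h c hc hct]
  · have hlt : c.val < t + 1 ↔ c.val < t := by omega
    have hle : t + 1 ≤ c.val ↔ t ≤ c.val := by omega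
    rw [hlt, hle]

theorem card_image_neighborPattern_le (p : Fin k × Finset (Fin k)) :
    #((range (n + 1)).image (neighborPattern a e X p)) ≤
      1 + #{c ∈ X | ¬(p.1 ∈ e c ↔ a c ∈ p.2)} := by
  refine (card_image_range_succ_le_one_add_card_changes _ n).trans ?_
  gcongr 1 + ?_
  calc _ ≤ #({c ∈ X | ¬(p.1 ∈ e c ↔ a c ∈ p.2)}.image Fin.val) := card_le_card fun j hj => ?_
    _ ≤ _ := card_image_le
  obtain ⟨c, hc, rfl, hmis⟩ := exists_mismatch_of_neighborPattern_succ_ne a e X (mem_filter.1 hj).2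
  exact mem_image_of_mem _ (mem_filter.2 ⟨hc, hmis⟩)

theorem card_neighborhoods_le :
    #(Xᶜ.image fun i => {c ∈ X | (rseqGraph a e).Adj i c}) ≤
      k * 2 ^ k + ∑ c ∈ X, #{p : Fin k × Finset (Fin k) | ¬(p.1 ∈ e c ↔ a c ∈ p.2)} := by
  calc #(Xᶜ.image fun i => {c ∈ X | (rseqGraph a e).Adj i c})
      ≤ #(univ.biUnion fun p => (range (n + 1)).image (neighborPattern a e X p)) := by
        refine card_le_card fun s hs => ?_
        obtain ⟨i, hi, rfl⟩ := mem_image.1 hs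
        rw [filter_adj_eq_neighborPattern a e X (mem_compl.1 hi)]
        exact mem_biUnion.2 ⟨_, mem_univ _, mem_image_of_mem _ (mem_range.2 (by omega))⟩
    _ ≤ ∑ p, #((range (n + 1)).image (neighborPattern a e X p)) := card_biUnion_le
    _ ≤ ∑ p : Fin k × Finset (Fin k), (1 + #{c ∈ X | ¬(p.1 ∈ e c ↔ a c ∈ p.2)}) :=
        sum_le_sum fun p _ => card_image_neighborPattern_le a e X p
    _ = k * 2 ^ k + ∑ c ∈ X, #{p : Fin k × Finset (Fin k) | ¬(p.1 ∈ e c ↔ a c ∈ p.2)} := by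
        simp only [sum_add_distrib, sum_const, card_univ, Fintype.card_prod, Fintype.card_fin,
          Fintype.card_finset, smul_eq_mul, mul_one, card_filter]
        rw [sum_comm]

end RainbowThreshold

theorem neighborhood_classes_upper_bound {n k m : ℕ}
    (a : Fin n → Fin k) (e : Fin n → Finset (Fin k))
    (X : Finset (Fin n)) (hm : X.card = m) :
    (((Xᶜ).image
        (fun i => X.filter (fun c => (rseqGraph a e).Adj i c))).card : ℚ) ≤
      k * 2 ^ k * (1 + (m : ℚ) / 2) := by
  have half : ∀ c, (#{p : Fin k × Finset (Fin k) | ¬(p.1 ∈ e c ↔ a c ∈ p.2)} : ℚ) =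
      k * 2 ^ k / 2 := fun c => by
    have := two_mul_card_filter_not_iff_mem (e c) (a c)
    rw [Fintype.card_fin] at this
    rw [eq_div_iff two_ne_zero, mul_comm]
    exact_mod_cast this
  calc _ ≤ (k * 2 ^ k + ∑ c ∈ X, #{p : Fin k × Finset (Fin k) | ¬(p.1 ∈ e c ↔ a c ∈ p.2)} : ℚ) :=
        by exact_mod_cast card_neighborhoods_le a e X
    _ = k * 2 ^ k * (1 + (m : ℚ) / 2) := by
        push_cast
        rw [sum_congr rfl fun c _ => half c, sum_const, hm, nsmul_eq_mul]
        ring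
end

section
/- For every k ≥ 1, the proportion of k-rainbow threshold graphs on Fin (n+1) containing an isolated vertex is at least 1/(k! · (k·2^k)^{k + 2^k}) for all sufficiently large n, and likewise the proportion containing a dominating vertex (a vertex adjacent to all others) is at least 1/(k! · (k·2^k)^{k + 2^k}). Consequently, the limit as n → ∞ of the proportion of k-rainbow threshold graphs on Fin n satisfying the first-order sentence '(∃x)(∀y) ¬E(x,y)' is neither 0 nor 1 (if it exists); i.e., k-rainbow threshold graphs do not satisfy a first-order 0-1 law. -/
open scoped Classical in
/-- The set of k-rainbow threshold graphs on `Fin n`. -/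
noncomputable def RainGraph (k n : ℕ) : Finset (SimpleGraph (Fin n)) :=
  Finset.image (fun S : (Fin n → Fin k) × (Fin n → Finset (Fin k)) =>
    rseqGraph S.1 S.2) Finset.univ

/-!
Fix `k ≥ 1` and write `T = k·2^k`, the number of choices of (colour, colour set) per vertex, so
there are at most `T^n` graphs on `n` vertices. Conversely, put first one vertex of each colour
with empty colour set, then `M` free vertices, then for each colour `c` a vertex of colour `c`
with colour set `{c}`: the neighbours of a free vertex in the first block are its colour set, and
its neighbour in the last block is its colour, so this gives `T^M` distinct graphs on `M + 2k`
vertices. Appending a vertex with colour set `∅` (resp. all colours) makes it isolated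
(resp. dominating), and deleting it recovers the original graph; hence both kinds of graphs
form a proportion at least `T^{-(2k+1)}` of the graphs on `n + 1 ≥ 2k + 1` vertices. Since no
graph on at least two vertices has both an isolated and a dominating vertex, the proportion with
an isolated vertex stays in `[c, 1 - c]` for some `c > 0`.
-/

open Finset

section RainbowSequences

variable {k n : ℕ}

lemma rseqGraph_adj_of_lt {a : Fin n → Fin k} {e : Fin n → Finset (Fin k)} {x y : Fin n}
    (hxy : x < y) : (rseqGraph a e).Adj x y ↔ a x ∈ e y := by
  change (x < y ∧ _) ∨ (y < x ∧ _) ↔ _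
  simp [hxy, hxy.not_gt]

lemma mem_rainGraph {G : SimpleGraph (Fin n)} :
    G ∈ RainGraph k n ↔
      ∃ (a : Fin n → Fin k) (e : Fin n → Finset (Fin k)), rseqGraph a e = G := by
  simp [RainGraph]

lemma card_rainGraph_le : #(RainGraph k n) ≤ (k * 2 ^ k) ^ n := by
  classical
  refine card_image_le.trans_eq ?_
  simp [Fintype.card_finset, mul_pow]

end RainbowSequences

section Snoc

variable {k n : ℕ} (a : Fin n → Fin k) (e : Fin n → Finset (Fin k)) (c : Fin k)
  (E : Finset (Fin k))

lemma comap_castSucc_rseqGraph_snoc :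
    (rseqGraph (Fin.snoc a c : Fin (n + 1) → Fin k) (Fin.snoc e E)).comap Fin.castSucc =
      rseqGraph a e := by
  ext x y
  simp [rseqGraph]

lemma rseqGraph_snoc_adj_last (x : Fin n) :
    (rseqGraph (Fin.snoc a c : Fin (n + 1) → Fin k) (Fin.snoc e E)).Adj
      (Fin.last n) x.castSucc ↔ a x ∈ E := by
  rw [SimpleGraph.adj_comm, rseqGraph_adj_of_lt (Fin.castSucc_lt_last x)]
  simp

lemma rseqGraph_snoc_empty_isolated :
    ∀ y, ¬ (rseqGraph (Fin.snoc a c : Fin (n + 1) → Fin k) (Fin.snoc e ∅)).Adj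
      (Fin.last n) y :=
  Fin.lastCases (SimpleGraph.irrefl _) fun x => by simp [rseqGraph_snoc_adj_last]

lemma rseqGraph_snoc_univ_dominating :
    ∀ y, y ≠ Fin.last n →
      (rseqGraph (Fin.snoc a c : Fin (n + 1) → Fin k) (Fin.snoc e univ)).Adj (Fin.last n) y :=
  Fin.lastCases (fun h => absurd rfl h) fun x _ => by simp [rseqGraph_snoc_adj_last]

end Snoc

lemma card_rainGraph_le_card_filter {k n : ℕ} {P : SimpleGraph (Fin (n + 1)) → Prop}
    [DecidablePred P] (c : Fin k) (E : Finset (Fin k))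
    (hP : ∀ a e, P (rseqGraph (Fin.snoc a c : Fin (n + 1) → Fin k) (Fin.snoc e E))) :
    #(RainGraph k n) ≤ #((RainGraph k (n + 1)).filter P) := by
  refine card_le_card_of_surjOn (SimpleGraph.comap Fin.castSucc) fun G hG => ?_
  obtain ⟨a, e, rfl⟩ := mem_rainGraph.1 hG
  refine ⟨_, mem_filter.2 ⟨mem_rainGraph.2 ⟨_, _, rfl⟩, hP a e⟩, ?_⟩
  exact comap_castSucc_rseqGraph_snoc a e c E

section Blocks

variable {k M : ℕ}

def blockColors (b : Fin M → Fin k) : Fin (k + M + k) → Fin k :=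
  Fin.append (Fin.append id b) id

def blockSets (f : Fin M → Finset (Fin k)) : Fin (k + M + k) → Finset (Fin k) :=
  Fin.append (Fin.append (fun _ => ∅) f) ({·})

lemma rseqGraph_block_adj_first_middle (b : Fin M → Fin k) (f : Fin M → Finset (Fin k))
    (c : Fin k) (j : Fin M) :
    (rseqGraph (blockColors b) (blockSets f)).Adj
      (Fin.castAdd k (Fin.castAdd M c)) (Fin.castAdd k (Fin.natAdd k j)) ↔ c ∈ f j := by
  rw [rseqGraph_adj_of_lt (by simp [Fin.lt_def]; omega)]
  simp [blockColors, blockSets]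

lemma rseqGraph_block_adj_middle_last (b : Fin M → Fin k) (f : Fin M → Finset (Fin k))
    (j : Fin M) (c : Fin k) :
    (rseqGraph (blockColors b) (blockSets f)).Adj
      (Fin.castAdd k (Fin.natAdd k j)) (Fin.natAdd (k + M) c) ↔ b j = c := by
  rw [rseqGraph_adj_of_lt (by simp [Fin.lt_def]; omega)]
  simp [blockColors, blockSets]

lemma rseqGraph_block_injective :
    Function.Injective fun p : (Fin M → Fin k) × (Fin M → Finset (Fin k)) =>
      rseqGraph (blockColors p.1) (blockSets p.2) := by
  rintro ⟨b, f⟩ ⟨b', f'⟩ h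
  simp only at h
  have hb : b = b' := funext fun j => by
    rw [← rseqGraph_block_adj_middle_last b f, h, rseqGraph_block_adj_middle_last]
  have hf : f = f' := funext fun j => Finset.ext fun c => by
    rw [← rseqGraph_block_adj_first_middle b f, h, rseqGraph_block_adj_first_middle]
  rw [hb, hf]

lemma pow_le_card_rainGraph : (k * 2 ^ k) ^ M ≤ #(RainGraph k (k + M + k)) := by
  classical
  calc (k * 2 ^ k) ^ M
      = #(univ.image fun p : (Fin M → Fin k) × (Fin M → Finset (Fin k)) =>
          rseqGraph (blockColors p.1) (blockSets p.2)) := by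
        rw [card_image_of_injective _ rseqGraph_block_injective]
        simp [Fintype.card_finset, mul_pow]
    _ ≤ #(RainGraph k (k + M + k)) :=
        card_le_card fun G hG => by
          obtain ⟨p, -, rfl⟩ := mem_image.1 hG
          exact mem_rainGraph.2 ⟨_, _, rfl⟩

end Blocks

lemma inv_pow_le_card_filter_div_card {k n : ℕ} (hn : 2 * k ≤ n)
    {P : SimpleGraph (Fin (n + 1)) → Prop} [DecidablePred P] (c : Fin k) (E : Finset (Fin k))
    (hP : ∀ a e, P (rseqGraph (Fin.snoc a c : Fin (n + 1) → Fin k) (Fin.snoc e E))) :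
    (((k : ℝ) * 2 ^ k) ^ (2 * k + 1))⁻¹ ≤
      (#((RainGraph k (n + 1)).filter P) : ℝ) / #(RainGraph k (n + 1)) := by
  obtain ⟨M, rfl⟩ : ∃ M, n = k + M + k := ⟨n - 2 * k, by omega⟩
  have hlow : ((k : ℝ) * 2 ^ k) ^ M ≤ #((RainGraph k (k + M + k + 1)).filter P) := by
    exact_mod_cast pow_le_card_rainGraph.trans (card_rainGraph_le_card_filter c E hP)
  have hup :
      (#(RainGraph k (k + M + k + 1)) : ℝ) ≤ ((k : ℝ) * 2 ^ k) ^ (k + M + k + 1) := by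
    exact_mod_cast card_rainGraph_le
  set T : ℝ := k * 2 ^ k
  have hT : 0 < T := by have := c.pos; positivity
  have hpos : (0 : ℝ) < #(RainGraph k (k + M + k + 1)) :=
    (pow_pos hT M).trans_le (hlow.trans (by exact_mod_cast card_filter_le _ _))
  calc (T ^ (2 * k + 1))⁻¹ = T ^ M / T ^ (k + M + k + 1) := by
        rw [show k + M + k + 1 = M + (2 * k + 1) by ring, pow_add T M,
          div_mul_cancel_left₀ (pow_ne_zero _ hT.ne')]
    _ ≤ #((RainGraph k (k + M + k + 1)).filter P) / T ^ (k + M + k + 1) := by gcongr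
    _ ≤ #((RainGraph k (k + M + k + 1)).filter P) / #(RainGraph k (k + M + k + 1)) := by
        gcongr

lemma one_div_factorial_mul_pow_le_inv_pow {k : ℕ} (hk : 1 ≤ k) :
    1 / ((k.factorial : ℝ) * ((k : ℝ) * 2 ^ k) ^ (k + 2 ^ k)) ≤
      (((k : ℝ) * 2 ^ k) ^ (2 * k + 1))⁻¹ := by
  have hT : (1 : ℝ) ≤ k * 2 ^ k :=
    one_le_mul_of_one_le_of_one_le (by exact_mod_cast hk) (one_le_pow₀ one_le_two)
  rw [one_div]
  refine inv_anti₀ (by positivity) ?_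
  calc ((k : ℝ) * 2 ^ k) ^ (2 * k + 1)
      ≤ ((k : ℝ) * 2 ^ k) ^ (k + 2 ^ k) :=
        pow_le_pow_right₀ hT (by have := k.lt_two_pow_self; omega)
    _ ≤ k.factorial * ((k : ℝ) * 2 ^ k) ^ (k + 2 ^ k) :=
        le_mul_of_one_le_left (by positivity) (by exact_mod_cast k.factorial_pos)

lemma SimpleGraph.not_exists_dominating_of_exists_isolated {V : Type*} [Nontrivial V]
    {G : SimpleGraph V} : (∃ x, ∀ y, ¬ G.Adj x y) → ¬ ∃ z, ∀ y, y ≠ z → G.Adj z y := by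
  rintro ⟨x, hx⟩ ⟨z, hz⟩
  obtain rfl | hxz := eq_or_ne x z
  · obtain ⟨y, hy⟩ := exists_ne x
    exact hx y (hz y hy)
  · exact hx z (hz x hxz).symm

lemma card_filter_div_add_card_filter_div_le_one {α : Type*} (s : Finset α) {p q : α → Prop}
    [DecidablePred p] [DecidablePred q] (h : ∀ x ∈ s, p x → ¬ q x) :
    (#(s.filter p) : ℝ) / #s + #(s.filter q) / #s ≤ 1 := by
  classical
  rw [← add_div]
  refine div_le_one_of_le₀ ?_ (Nat.cast_nonneg _)
  rw [← Nat.cast_add, ← card_union_of_disjoint (disjoint_filter.2 h)]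
  exact_mod_cast card_le_card (union_subset (filter_subset _ _) (filter_subset _ _))

open scoped Classical in
theorem no_zero_one_law (k : ℕ) (hk : 1 ≤ k) :
    (∃ N : ℕ, ∀ n ≥ N,
      (((RainGraph k (n + 1)).filter
          (fun G => ∃ x, ∀ y, ¬ G.Adj x y)).card : ℝ) /
          ((RainGraph k (n + 1)).card : ℝ) ≥
        1 / ((Nat.factorial k : ℝ) * ((k : ℝ) * 2 ^ k) ^ (k + 2 ^ k)) ∧
      (((RainGraph k (n + 1)).filter
          (fun G => ∃ x, ∀ y, y ≠ x → G.Adj x y)).card : ℝ) /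
          ((RainGraph k (n + 1)).card : ℝ) ≥
        1 / ((Nat.factorial k : ℝ) * ((k : ℝ) * 2 ^ k) ^ (k + 2 ^ k))) ∧
    (∀ L : ℝ,
      Filter.Tendsto
        (fun n => (((RainGraph k n).filter
            (fun G => ∃ x, ∀ y, ¬ G.Adj x y)).card : ℝ) /
          ((RainGraph k n).card : ℝ)) Filter.atTop (nhds L) →
      L ≠ 0 ∧ L ≠ 1) := by
  set bound := 1 / ((Nat.factorial k : ℝ) * ((k : ℝ) * 2 ^ k) ^ (k + 2 ^ k))
  have hbound := one_div_factorial_mul_pow_le_inv_pow hk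
  have isolated (n : ℕ) (hn : 2 * k ≤ n) : bound ≤
      #((RainGraph k (n + 1)).filter fun G => ∃ x, ∀ y, ¬ G.Adj x y) / #(RainGraph k (n + 1)) :=
    hbound.trans <| inv_pow_le_card_filter_div_card hn ⟨0, hk⟩ ∅ fun a e =>
      ⟨_, rseqGraph_snoc_empty_isolated a e _⟩
  have dominating (n : ℕ) (hn : 2 * k ≤ n) : bound ≤
      #((RainGraph k (n + 1)).filter fun G => ∃ x, ∀ y, y ≠ x → G.Adj x y) /
        #(RainGraph k (n + 1)) :=
    hbound.trans <| inv_pow_le_card_filter_div_card hn ⟨0, hk⟩ univ fun a e =>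
      ⟨_, rseqGraph_snoc_univ_dominating a e _⟩
  refine ⟨⟨2 * k, fun n hn => ⟨isolated n hn, dominating n hn⟩⟩, fun L hL => ?_⟩
  rw [← Filter.tendsto_add_atTop_iff_nat 1] at hL
  have hL_ge : bound ≤ L := ge_of_tendsto hL (Filter.eventually_atTop.2 ⟨2 * k, isolated⟩)
  have hL_le : L ≤ 1 - bound := le_of_tendsto hL <| Filter.eventually_atTop.2 ⟨2 * k,
    fun n hn => by
      have : Nontrivial (Fin (n + 1)) := Fin.nontrivial_iff_two_le.2 (by omega)
      linarith [dominating n hn, card_filter_div_add_card_filter_div_le_one (RainGraph k (n + 1))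
        fun (G : SimpleGraph (Fin (n + 1))) _ => G.not_exists_dominating_of_exists_isolated]⟩
  have hbound_pos : 0 < bound := by positivity
  exact ⟨by linarith, by linarith⟩
end

section
/- For every k ≥ 1, asymptotically almost surely a uniformly random (k+1)-rainbow threshold graph on Fin n is not isomorphic to any k-rainbow threshold graph on Fin n; that is, the ratio |{G ∈ RainGraph_{k+1}(n) : ∃ H ∈ RainGraph_k(n), G ≅ H}| / |RainGraph_{k+1}(n)| tends to 0 as n → ∞. -/
/-!
A `k`-rainbow graph has no induced matching with `k + 1` edges: two lower endpoints share a
colour, which forces each edge to lie entirely below the other. A `(k + 1)`-rainbow sequence, on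
the other hand, acquires such a matching as soon as one of its `n / (2k + 2)` consecutive windows
carries a fixed pattern. So, with `M = (k + 1) 2^(k + 1)`, at most
`(M^(2k+2) - 1)^(n / (2k+2)) M^(n mod (2k+2))` of the `M^n` sequences give graphs isomorphic to
`k`-rainbow graphs. Meanwhile there are at least `M^(n - 2k - 2)` distinct `(k + 1)`-rainbow
graphs, since probes at both ends of a sequence make the graph determine all entries in between.
The ratio is thus `O((1 - M^(-2k-2))^(n / (2k+2)))`.
-/

open Finset SimpleGraph

/-- The perfect matching on `2t` vertices: vertex `(i, 0)` is joined to `(i, 1)`. -/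
abbrev matchingGraph (t : ℕ) : SimpleGraph (Fin t × Fin 2) := (⊥ : SimpleGraph (Fin t)) □ ⊤

lemma isEmpty_matchingGraph_embedding_rseqGraph {n k : ℕ} (a : Fin n → Fin k)
    (e : Fin n → Finset (Fin k)) : IsEmpty (matchingGraph (k + 1) ↪g rseqGraph a e) := by
  refine ⟨fun f => ?_⟩
  have cross (s t : Fin (k + 1)) (hst : s ≠ t) (x y : Fin 2) :
      ¬ (rseqGraph a e).Adj (f (s, x)) (f (t, y)) ∧ f (s, x) ≠ f (t, y) := by
    refine ⟨by simp [f.map_adj_iff, hst], fun h => hst ?_⟩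
    exact (Prod.ext_iff.mp (f.injective h)).1
  have edge (i : Fin (k + 1)) :
      ∃ x y : Fin 2, f (i, x) < f (i, y) ∧ a (f (i, x)) ∈ e (f (i, y)) := by
    have hadj : (rseqGraph a e).Adj (f (i, 0)) (f (i, 1)) := by
      simp [f.map_adj_iff]
    rcases hadj with h | h
    · exact ⟨0, 1, h⟩
    · exact ⟨1, 0, h⟩
  choose lo hi hlt hmem using edge
  obtain ⟨s, t, hst, hcol⟩ := Fintype.exists_ne_map_eq_of_card_lt
    (fun i => a (f (i, lo i))) (by simp)
  -- otherwise `lo s < hi t`, and the shared colour would join two different matching edges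
  have below (s t : Fin (k + 1)) (hst : s ≠ t) (hcol : a (f (s, lo s)) = a (f (t, lo t))) :
      f (t, hi t) < f (s, lo s) := by
    obtain ⟨hnadj, hne⟩ := cross s t hst (lo s) (hi t)
    refine lt_of_le_of_ne (not_lt.mp fun h => hnadj (Or.inl ⟨h, ?_⟩)) hne.symm
    exact hcol ▸ hmem t
  exact lt_asymm ((hlt s).trans (below t s hst.symm hcol.symm))
    ((hlt t).trans (below s t hst hcol))

def rainbowGraph {n j : ℕ} (s : Fin n → Fin j × Finset (Fin j)) : SimpleGraph (Fin n) :=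
  rseqGraph (fun i => (s i).1) (fun i => (s i).2)

lemma mem_RainGraph {j n : ℕ} {G : SimpleGraph (Fin n)} :
    G ∈ RainGraph j n ↔ ∃ s : Fin n → Fin j × Finset (Fin j), rainbowGraph s = G := by
  simp only [RainGraph, mem_image, mem_univ, true_and]
  exact ⟨fun ⟨S, hS⟩ => ⟨fun i => (S.1 i, S.2 i), hS⟩,
    fun ⟨s, hs⟩ => ⟨(fun i => (s i).1, fun i => (s i).2), hs⟩⟩

lemma rainbowGraph_adj_of_lt {n j : ℕ} (s : Fin n → Fin j × Finset (Fin j)) {u v : Fin n}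
    (huv : u < v) : (rainbowGraph s).Adj u v ↔ (s u).1 ∈ (s v).2 := by
  simp [rainbowGraph, rseqGraph, huv, huv.not_gt]

lemma rainbowGraph_comp {m n j : ℕ} (s : Fin n → Fin j × Finset (Fin j)) {f : Fin m → Fin n}
    (hf : StrictMono f) : rainbowGraph (s ∘ f) = (rainbowGraph s).comap f := by
  ext u v
  simp [rainbowGraph, rseqGraph, hf.lt_iff_lt]

/-- Colour `i` at positions `2i` and `2i + 1`, with colour sets `∅` and `{i}`. -/
def matchingPattern (j : ℕ) : Fin (j * 2) → Fin j × Finset (Fin j) :=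
  (fun q : Fin j × Fin 2 => (q.1, if q.2 = 1 then {q.1} else ∅)) ∘ finProdFinEquiv.symm

def matchingGraphIsoPattern (j : ℕ) : matchingGraph j ≃g rainbowGraph (matchingPattern j) where
  toEquiv := finProdFinEquiv
  map_rel_iff' {p q} := by
    obtain ⟨i, x⟩ := p
    obtain ⟨i', y⟩ := q
    simp only [rainbowGraph, rseqGraph, matchingPattern, Function.comp_apply,
      Equiv.symm_apply_apply, Fin.lt_def, finProdFinEquiv_apply_val, boxProd_adj]
    fin_cases x <;> fin_cases y <;> simp [Fin.ext_iff] <;> omega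

lemma nonempty_matchingGraph_embedding_of_comp_eq {n j : ℕ} {s : Fin n → Fin j × Finset (Fin j)}
    {f : Fin (j * 2) → Fin n} (hf : StrictMono f) (hs : s ∘ f = matchingPattern j) :
    Nonempty (matchingGraph j ↪g rainbowGraph s) := by
  have hcomap := rainbowGraph_comp s hf
  rw [hs] at hcomap
  exact ⟨(matchingGraphIsoPattern j).toEmbedding.trans
    (hcomap ▸ Embedding.comap ⟨f, hf.injective⟩ (rainbowGraph s))⟩

lemma card_filter_forall_window_ne_le {τ β γ α : Type*} [Fintype τ] [DecidableEq τ] [Fintype β]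
    [Fintype γ] [Fintype α] [DecidableEq α] (f : β × γ ↪ τ) (w : γ → α) :
    #{s : τ → α | ∀ c, (fun o => s (f (c, o))) ≠ w} ≤
      (Fintype.card α ^ Fintype.card γ - 1) ^ Fintype.card β *
        Fintype.card α ^ (Fintype.card τ - Fintype.card β * Fintype.card γ) := by
  classical
  let restrict (s : {s : τ → α // ∀ c, (fun o => s (f (c, o))) ≠ w}) :
      (β → {v : γ → α // v ≠ w}) × ({i // i ∉ Set.range f} → α) :=
    (fun c => ⟨fun o => s.1 (f (c, o)), s.2 c⟩, fun i => s.1 i)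
  have hinj : Function.Injective restrict := by
    rintro ⟨s, _⟩ ⟨s', _⟩ h
    simp only [restrict, Prod.mk.injEq, funext_iff, Subtype.ext_iff] at h
    refine Subtype.ext (funext fun i => ?_)
    by_cases hi : i ∈ Set.range f
    · obtain ⟨⟨c, o⟩, rfl⟩ := hi
      exact h.1 c o
    · exact h.2 ⟨i, hi⟩
  have hcompl : Fintype.card {i // i ∉ Set.range f} =
      Fintype.card τ - Fintype.card β * Fintype.card γ := by
    rw [Fintype.card_subtype_compl, Fintype.card_range f, Fintype.card_prod]
  have hne : Fintype.card {v : γ → α // v ≠ w} = Fintype.card α ^ Fintype.card γ - 1 := by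
    rw [Fintype.card_subtype_compl, Fintype.card_subtype_eq, Fintype.card_fun]
  rw [← Fintype.card_subtype]
  convert Fintype.card_le_of_injective restrict hinj using 1
  rw [Fintype.card_prod, Fintype.card_fun, Fintype.card_fun, hne, hcompl]

section Probes

variable {n j : ℕ}

def probedSeq (g : Fin (n - 2 * j) → Fin j × Finset (Fin j)) (i : Fin n) : Fin j × Finset (Fin j) :=
  if h : (i : ℕ) < j then (⟨i, h⟩, {⟨i, h⟩})
  else if h' : (i : ℕ) - j < n - 2 * j then g ⟨i - j, h'⟩
  else (⟨i + j - n, by omega⟩, {⟨i + j - n, by omega⟩})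

variable (g : Fin (n - 2 * j) → Fin j × Finset (Fin j))

lemma probedSeq_head (c : Fin j) (hc : (c : ℕ) < n) : probedSeq g ⟨c, hc⟩ = (c, {c}) := by
  simp [probedSeq]

lemma probedSeq_free (t : Fin (n - 2 * j)) (ht : j + (t : ℕ) < n) :
    probedSeq g ⟨j + t, ht⟩ = g t := by
  have := t.isLt
  simp [probedSeq, show ¬ j + (t : ℕ) < j by omega, this]

lemma probedSeq_tail (c : Fin j) (hn : 2 * j ≤ n) (hc : n - j + (c : ℕ) < n) :
    probedSeq g ⟨n - j + c, hc⟩ = (c, {c}) := by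
  have hcj := c.isLt
  simp [probedSeq, show ¬ n - j + (c : ℕ) < j by omega, show ¬ n - j + c - j < n - 2 * j by omega,
    show n - j + (c : ℕ) + j - n = c by omega]

/-- The free entries are read off the graph: the colour set of a free vertex from its edges to the
head probes, its colour from its edges to the tail probes. -/
lemma rainbowGraph_probedSeq_injective :
    Function.Injective fun g : Fin (n - 2 * j) → Fin j × Finset (Fin j) =>
      rainbowGraph (probedSeq g) := by
  intro g g' hgg
  funext t
  have htn := t.isLt
  have hfree : j + (t : ℕ) < n := by omega
  have head_adj (g : Fin (n - 2 * j) → Fin j × Finset (Fin j)) (c : Fin j) :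
      (rainbowGraph (probedSeq g)).Adj ⟨c, by omega⟩ ⟨j + t, hfree⟩ ↔ c ∈ (g t).2 := by
    rw [rainbowGraph_adj_of_lt _ (by simp [Fin.lt_def]; omega), probedSeq_head, probedSeq_free]
  have tail_adj (g : Fin (n - 2 * j) → Fin j × Finset (Fin j)) (c : Fin j) :
      (rainbowGraph (probedSeq g)).Adj ⟨j + t, hfree⟩ ⟨n - j + c, by omega⟩ ↔ (g t).1 = c := by
    rw [rainbowGraph_adj_of_lt _ (by simp [Fin.lt_def]; omega), probedSeq_free,
      probedSeq_tail _ _ (by omega), Finset.mem_singleton]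
  simp only at hgg
  refine Prod.ext ?_ (Finset.ext fun c => by rw [← head_adj, ← head_adj, hgg])
  exact ((tail_adj g' _).mp (hgg ▸ (tail_adj g _).mpr rfl)).symm

end Probes

lemma card_pow_le_card_RainGraph (j n : ℕ) :
    Fintype.card (Fin j × Finset (Fin j)) ^ (n - 2 * j) ≤ #(RainGraph j n) := by
  rw [← Fintype.card_fin (n - 2 * j), ← Fintype.card_fun, ← card_univ]
  exact card_le_card_of_injOn _ (fun g _ => mem_RainGraph.mpr ⟨_, rfl⟩)
    rainbowGraph_probedSeq_injective.injOn

def consecutiveWindows {b m n : ℕ} (h : b * m ≤ n) : Fin b × Fin m ↪ Fin n :=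
  finProdFinEquiv.toEmbedding.trans (Fin.castLEEmb h)

lemma consecutiveWindows_strictMono {b m n : ℕ} (h : b * m ≤ n) (c : Fin b) :
    StrictMono fun o => consecutiveWindows h (c, o) := by
  intro o o' ho
  simp only [consecutiveWindows, Function.Embedding.trans_apply, Equiv.coe_toEmbedding,
    Fin.castLEEmb_apply, Fin.lt_def, Fin.val_castLE, finProdFinEquiv_apply_val] at ho ⊢
  omega

open scoped Classical in
lemma card_filter_iso_RainGraph_le (k n : ℕ) :
    #{G ∈ RainGraph (k + 1) n | ∃ H ∈ RainGraph k n, Nonempty (G ≃g H)} ≤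
      (Fintype.card (Fin (k + 1) × Finset (Fin (k + 1))) ^ ((k + 1) * 2) - 1) ^
          (n / ((k + 1) * 2)) *
        Fintype.card (Fin (k + 1) × Finset (Fin (k + 1))) ^
          (n - n / ((k + 1) * 2) * ((k + 1) * 2)) := by
  have h := Nat.div_mul_le_self n ((k + 1) * 2)
  let avoiding : Finset (Fin n → Fin (k + 1) × Finset (Fin (k + 1))) :=
    {s | ∀ c, (fun o => s (consecutiveWindows h (c, o))) ≠ matchingPattern (k + 1)}
  calc _ ≤ #(avoiding.image rainbowGraph) := by
        refine card_le_card fun G hG => ?_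
        obtain ⟨hG, H, hH, ⟨φ⟩⟩ := mem_filter.mp hG
        obtain ⟨s, rfl⟩ := mem_RainGraph.mp hG
        obtain ⟨t, rfl⟩ := mem_RainGraph.mp hH
        refine mem_image.mpr ⟨s, mem_filter.mpr ⟨mem_univ _, fun c hc => ?_⟩, rfl⟩
        obtain ⟨ι⟩ := nonempty_matchingGraph_embedding_of_comp_eq
          (consecutiveWindows_strictMono h c) hc
        exact (isEmpty_matchingGraph_embedding_rseqGraph _ _).false (ι.trans φ.toEmbedding)
    _ ≤ _ := card_image_le
    _ ≤ _ := by
        convert card_filter_forall_window_ne_le (consecutiveWindows h) (matchingPattern (k + 1))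
          using 3 <;> simp only [Fintype.card_fin]

open scoped Classical in
lemma card_filter_iso_RainGraph_mul_le (k n : ℕ) :
    #{G ∈ RainGraph (k + 1) n | ∃ H ∈ RainGraph k n, Nonempty (G ≃g H)} *
        (Fintype.card (Fin (k + 1) × Finset (Fin (k + 1))) ^ ((k + 1) * 2)) ^ (n / ((k + 1) * 2)) ≤
      Fintype.card (Fin (k + 1) × Finset (Fin (k + 1))) ^ (2 * (k + 1)) *
        (Fintype.card (Fin (k + 1) × Finset (Fin (k + 1))) ^ ((k + 1) * 2) - 1) ^
            (n / ((k + 1) * 2)) *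
          #(RainGraph (k + 1) n) := by
  set M := Fintype.card (Fin (k + 1) × Finset (Fin (k + 1)))
  set m := (k + 1) * 2
  have hM : 1 ≤ M := Fintype.card_pos
  calc _ ≤ (M ^ m - 1) ^ (n / m) * M ^ (n - n / m * m) * M ^ (n / m * m) := by
        rw [← pow_mul, mul_comm m (n / m)]
        exact Nat.mul_le_mul_right _ (card_filter_iso_RainGraph_le k n)
    _ = (M ^ m - 1) ^ (n / m) * M ^ n := by
        rw [mul_assoc, ← pow_add, Nat.sub_add_cancel (Nat.div_mul_le_self n m)]
    _ ≤ (M ^ m - 1) ^ (n / m) * (M ^ (2 * (k + 1)) * M ^ (n - 2 * (k + 1))) := by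
        rw [← pow_add]
        gcongr
        omega
    _ ≤ (M ^ m - 1) ^ (n / m) * (M ^ (2 * (k + 1)) * #(RainGraph (k + 1) n)) := by
        gcongr
        exact card_pow_le_card_RainGraph (k + 1) n
    _ = _ := by ring

lemma tendsto_div_zero_of_mul_pow_le {u v b : ℕ → ℕ} {C P Q : ℕ} (hPQ : P < Q)
    (hb : Filter.Tendsto b Filter.atTop Filter.atTop) (h : ∀ n, u n * Q ^ b n ≤ C * P ^ b n * v n) :
    Filter.Tendsto (fun n => (u n : ℝ) / v n) Filter.atTop (nhds 0) := by
  have hQ : (0 : ℝ) < Q := by exact_mod_cast (Nat.zero_le P).trans_lt hPQ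
  have hlim : Filter.Tendsto (fun n => (C : ℝ) * ((P : ℝ) / Q) ^ b n) Filter.atTop (nhds 0) := by
    simpa using ((tendsto_pow_atTop_nhds_zero_of_lt_one (by positivity)
      ((div_lt_one hQ).mpr (by exact_mod_cast hPQ))).comp hb).const_mul (C : ℝ)
  refine squeeze_zero (fun n => by positivity)
    (fun n => div_le_of_le_mul₀ (by positivity) (by positivity) ?_) hlim
  have key := (Nat.cast_le (α := ℝ)).mpr (h n)
  push_cast at key
  rw [div_pow, mul_div_assoc', div_mul_eq_mul_div, le_div_iff₀ (by positivity)]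
  linarith

open scoped Classical in
theorem aas_not_isomorphic_to_lower_rainbow_general (k : ℕ) :
    Filter.Tendsto
      (fun n =>
        (((RainGraph (k + 1) n).filter
            (fun G => ∃ H ∈ RainGraph k n, Nonempty (G ≃g H))).card : ℝ) /
          ((RainGraph (k + 1) n).card : ℝ))
      Filter.atTop (nhds 0) :=
  tendsto_div_zero_of_mul_pow_le (Nat.sub_lt (by positivity) one_pos)
    (Nat.tendsto_div_const_atTop (by omega)) (card_filter_iso_RainGraph_mul_le k)

open scoped Classical in
theorem aas_not_isomorphic_to_lower_rainbow (k : ℕ) (hk : 1 ≤ k) :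
    Filter.Tendsto
      (fun n =>
        (((RainGraph (k + 1) n).filter
            (fun G => ∃ H ∈ RainGraph k n, Nonempty (G ≃g H))).card : ℝ) /
          ((RainGraph (k + 1) n).card : ℝ))
      Filter.atTop (nhds 0) :=
  aas_not_isomorphic_to_lower_rainbow_general k
end
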